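/- arXiv:0912.1999 — 2 statements merged into one kernel-verified Lean document; each statement's English description precedes it below -/
import Mathlib

section
/- Let μ be a positive real number and a, b positive integers with a > μb. The probability P that a random ordering of a votes for A and b votes for B satisfies a_r > μ·b_r for all r is at least (a - ⌊μb⌋)/(a + b). -/
/-
Dvoretzky–Motzkin cycle lemma. Extend a vote sequence periodically and let `S` be its walk with
step `+1` for an A-vote and `-μ` for a B-vote, so `S (m + n) = S m + d` with `d = a - μ b` and every
step is at most `1`. The rotation starting at `j` is a strict ballot sequence as soon as `j` is a
strict suffix minimum of `S` (`S j < S m` for all `m > j`). For each integer `0 ≤ t < d`, the last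
time `S` is at most `min S + t` is such a point inside the first period, and these points are
distinct since their values lie in the disjoint intervals `(min S + t - 1, min S + t]`. So every
sequence has at least `⌈d⌉ = a - ⌊μ b⌋` good rotations, and double counting pairs (sequence,
rotation), rotations being bijections, gives `⌈d⌉ · #Ω ≤ (a + b) · #good`.
-/

/-- Number of A-votes (true) among the first `r` positions. -/
def countA (n : ℕ) (v : Fin n → Bool) (r : ℕ) : ℕ :=
  (Finset.univ.filter (fun i : Fin n => i.val < r ∧ v i = true)).card

/-- Number of B-votes (false) among the first `r` positions. -/
def countB (n : ℕ) (v : Fin n → Bool) (r : ℕ) : ℕ :=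
  (Finset.univ.filter (fun i : Fin n => i.val < r ∧ v i = false)).card

open Finset

section CycleLemma

variable {S : ℕ → ℝ} {n : ℕ} {d : ℝ}

def IsStrictSuffixMin (S : ℕ → ℝ) (j : ℕ) : Prop := ∀ m, j < m → S j < S m

lemma add_le_of_forall_lt_le (hn : 0 < n) (hper : ∀ m, S (m + n) = S m + d) (hd : 0 ≤ d) {c : ℝ}
    (hc : ∀ m < n, c ≤ S m) : ∀ m, n ≤ m → c + d ≤ S m := by
  intro m
  induction m using Nat.strong_induction_on with
  | _ m ih =>
    intro hm
    obtain ⟨k, rfl⟩ := Nat.exists_eq_add_of_le' hm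
    rw [hper]
    rcases lt_or_ge k n with hk | hk
    · linarith [hc k hk]
    · linarith [ih k (by omega) hk]

/-- The last time `S` is at most `y` is a strict suffix minimum whose value lies in `(y - 1, y]`. -/
lemma exists_isStrictSuffixMin_mem_Ioc (hper : ∀ m, S (m + n) = S m + d) (hd : 0 < d)
    (hstep : ∀ m, S (m + 1) ≤ S m + 1) {m₀ : ℕ} (hm₀ : m₀ < n) (hmin : ∀ m < n, S m₀ ≤ S m)
    {y : ℝ} (hy₀ : S m₀ ≤ y) (hy : y < S m₀ + d) :
    ∃ j < n, IsStrictSuffixMin S j ∧ S j ∈ Set.Ioc (y - 1) y := by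
  classical
  have hfar := add_le_of_forall_lt_le (Nat.zero_lt_of_lt hm₀) hper hd.le hmin
  set j := Nat.findGreatest (fun m => S m ≤ y) n
  have hjy : S j ≤ y := Nat.findGreatest_spec (P := fun m => S m ≤ y) hm₀.le hy₀
  have hjn : j < n := lt_of_not_ge fun h => by linarith [hfar j h]
  have hafter : ∀ m, j < m → y < S m := by
    intro m hm
    rcases lt_or_ge m n with hmn | hmn
    · exact lt_of_not_ge (Nat.findGreatest_is_greatest hm hmn.le)
    · linarith [hfar m hmn]
  refine ⟨j, hjn, fun m hm => hjy.trans_lt (hafter m hm), ?_, hjy⟩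
  linarith [hafter (j + 1) (lt_add_one j), hstep j]

open scoped Classical in
theorem ceil_le_card_isStrictSuffixMin (hper : ∀ m, S (m + n) = S m + d) (hd : 0 < d)
    (hstep : ∀ m, S (m + 1) ≤ S m + 1) :
    ⌈d⌉₊ ≤ #{j ∈ range n | IsStrictSuffixMin S j} := by
  have hn : 0 < n := Nat.pos_of_ne_zero fun h => by
    subst h
    linarith [hper 0]
  obtain ⟨m₀, hm₀, hmin⟩ := (range n).exists_min_image S (nonempty_range_iff.2 hn.ne')
  have hlevel : ∀ t < ⌈d⌉₊, ∃ j < n,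
      IsStrictSuffixMin S j ∧ S j ∈ Set.Ioc (S m₀ + t - 1) (S m₀ + t) := fun t ht =>
    exists_isStrictSuffixMin_mem_Ioc hper hd hstep (mem_range.1 hm₀)
      (fun m hm => hmin m (mem_range.2 hm)) (by simp) (by linarith [Nat.lt_ceil.1 ht])
  choose! j hjn hjmin hjval using hlevel
  calc ⌈d⌉₊ = #(range ⌈d⌉₊) := (card_range _).symm
    _ ≤ _ := by
      refine card_le_card_of_injOn j (fun t ht => ?_) fun t ht t' ht' htt' => ?_
      · have ht := mem_range.1 ht
        simpa using ⟨hjn t ht, hjmin t ht⟩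
      · have h := hjval t (mem_range.1 ht)
        have h' := hjval t' (mem_range.1 ht')
        rw [htt'] at h
        have : (t : ℝ) < t' + 1 := by linarith [h.1, h'.2]
        have : (t' : ℝ) < t + 1 := by linarith [h.2, h'.1]
        norm_cast at *
        omega

end CycleLemma

noncomputable def voteWeight (μ : ℝ) (x : Bool) : ℝ := if x then 1 else -μ

noncomputable def walk (μ : ℝ) (f : ℕ → Bool) (m : ℕ) : ℝ := ∑ i ∈ range m, voteWeight μ (f i)

lemma walk_add (μ : ℝ) (f : ℕ → Bool) (k m : ℕ) :
    walk μ f (k + m) = walk μ f k + walk μ (fun i => f (k + i)) m :=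
  sum_range_add _ _ _

lemma walk_succ_le {μ : ℝ} (hμ : -1 ≤ μ) (f : ℕ → Bool) (m : ℕ) :
    walk μ f (m + 1) ≤ walk μ f m + 1 := by
  have h : voteWeight μ (f m) ≤ 1 := by
    cases f m
    · simpa [voteWeight] using neg_le.1 hμ
    · simp [voteWeight]
  simpa [walk, sum_range_succ] using h

section Cyclic

def cyclicShift {n : ℕ} (v : Fin n → Bool) (j : Fin n) : Fin n → Bool := fun i => v (i + j)

lemma countA_decide_lt {n a : ℕ} (h : a ≤ n) : countA n (fun i => decide (i.val < a)) n = a := by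
  simp [countA, Fin.card_filter_val_lt, h]

-- `(i : Fin n)` is `i % n`, so `fun i : ℕ => v i` is the periodic extension of `v`.
open Fin.NatCast

variable {n : ℕ} [NeZero n]

lemma cyclicShift_injective (j : Fin n) :
    Function.Injective fun v : Fin n → Bool => cyclicShift v j :=
  fun v w h => funext fun i => by simpa [cyclicShift] using congrFun h (i - j)

lemma walk_cyclicShift (μ : ℝ) (v : Fin n → Bool) (j : Fin n) (r : ℕ) :
    walk μ (fun i : ℕ => cyclicShift v j i) r
      = walk μ (fun i : ℕ => v i) (j + r) - walk μ (fun i : ℕ => v i) j := by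
  rw [walk_add]
  simp [cyclicShift, add_comm]

lemma walk_add_self (μ : ℝ) (v : Fin n → Bool) (m : ℕ) :
    walk μ (fun i : ℕ => v i) (m + n)
      = walk μ (fun i : ℕ => v i) m + walk μ (fun i : ℕ => v i) n := by
  rw [add_comm, walk_add, add_comm]
  simp

lemma countA_sub_countB (μ : ℝ) (v : Fin n → Bool) {r : ℕ} (hr : r ≤ n) :
    (countA n v r : ℝ) - μ * countB n v r = walk μ (fun i : ℕ => v i) r := by
  have hwalk : walk μ (fun i : ℕ => v i) r
      = ∑ i ∈ range n, if i < r then voteWeight μ (v i) else 0 := by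
    rw [sum_ite, sum_const_zero, add_zero, walk]
    congr 1
    ext i
    simp only [mem_range, mem_filter]
    omega
  rw [hwalk, ← Fin.sum_univ_eq_sum_range]
  simp only [countA, countB, card_filter, Nat.cast_sum, Nat.cast_ite, Nat.cast_one, Nat.cast_zero,
    mul_sum, ← sum_sub_distrib, Fin.cast_val_eq_self]
  refine sum_congr rfl fun i _ => ?_
  by_cases h : (i : ℕ) < r <;> cases v i <;> simp [h, voteWeight]

lemma countA_add_countB (v : Fin n → Bool) : countA n v n + countB n v n = n := by
  -- for `μ = -1` every vote has weight `1`
  have h := countA_sub_countB (-1) v le_rfl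
  simp only [walk, voteWeight, neg_neg, ite_self, sum_const, card_range, nsmul_one] at h
  exact_mod_cast (by linarith : (countA n v n : ℝ) + countB n v n = n)

lemma countA_cyclicShift (v : Fin n → Bool) (j : Fin n) :
    countA n (cyclicShift v j) n = countA n v n := by
  have hcountA (w : Fin n → Bool) : (countA n w n : ℝ) = walk 0 (fun i : ℕ => w i) n := by
    simpa using countA_sub_countB 0 w le_rfl
  have h : (countA n (cyclicShift v j) n : ℝ) = countA n v n := by
    rw [hcountA, hcountA, walk_cyclicShift, walk_add_self]
    ring
  exact_mod_cast h

lemma countB_lt_countA_cyclicShift {μ : ℝ} {v : Fin n → Bool} {j : Fin n}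
    (hj : IsStrictSuffixMin (walk μ fun i : ℕ => v i) j) {r : ℕ} (hr₁ : 1 ≤ r) (hrn : r ≤ n) :
    μ * countB n (cyclicShift v j) r < countA n (cyclicShift v j) r := by
  have h := countA_sub_countB μ (cyclicShift v j) hrn
  rw [walk_cyclicShift] at h
  linarith [hj (j + r) (by omega)]

open scoped Classical in
lemma ceil_walk_le_card_isStrictSuffixMin {μ : ℝ} (hμ : -1 ≤ μ) (v : Fin n → Bool)
    (hd : 0 < walk μ (fun i : ℕ => v i) n) :
    ⌈walk μ (fun i : ℕ => v i) n⌉₊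
      ≤ #{j : Fin n | IsStrictSuffixMin (walk μ fun i : ℕ => v i) j} := by
  refine (ceil_le_card_isStrictSuffixMin (walk_add_self μ v) hd (walk_succ_le hμ _)).trans
    (card_le_card_of_injOn (fun j => (j : Fin n)) (fun j hj => ?_) fun j hj k hk hjk => ?_)
  · obtain ⟨hjn, hj⟩ := mem_filter.1 hj
    simpa [Nat.mod_eq_of_lt (mem_range.1 hjn)] using hj
  · simp only [mem_coe, mem_filter, mem_range] at hj hk
    simpa [Fin.val_cast_of_lt hj.1, Fin.val_cast_of_lt hk.1] using congrArg Fin.val hjk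

open scoped Classical in
lemma ceil_le_card_cyclicShift_ballot {μ : ℝ} (hμ : -1 ≤ μ) {v : Fin n → Bool}
    (hd : 0 < countA n v n - μ * countB n v n) :
    ⌈countA n v n - μ * countB n v n⌉₊ ≤ #{j | ∀ r, 1 ≤ r → r ≤ n →
      μ * countB n (cyclicShift v j) r < countA n (cyclicShift v j) r} := by
  rw [countA_sub_countB μ v le_rfl] at hd ⊢
  refine (ceil_walk_le_card_isStrictSuffixMin hμ v hd).trans (card_le_card fun j hj => ?_)
  simp only [mem_filter, mem_univ, true_and] at hj ⊢
  exact fun r => countB_lt_countA_cyclicShift hj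

end Cyclic

lemma card_mul_le_card_mul_of_injective {X ι : Type*} [Fintype X] [DecidableEq X] [Fintype ι]
    (σ : ι → X → X) (hσ : ∀ g, Function.Injective (σ g)) (Ω P : Finset X) (K : ℕ)
    (hK : ∀ x ∈ Ω, K ≤ #{g | σ g x ∈ P}) : K * #Ω ≤ Fintype.card ι * #P := by
  have := card_nsmul_le_card_nsmul (fun x g => σ g x ∈ P) (t := univ) hK fun g _ =>
    card_le_card_of_injOn (σ g) (fun x hx => (mem_filter.1 hx).2) (hσ g).injOn
  simpa [mul_comm] using this

open Classical in
theorem ballot_strict_lower_bound_general (μ : ℝ) (a b : ℕ) (hμ : 0 < μ) (ha : 0 < a)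
    (hab : μ * b < a) :
    ((a : ℝ) - (⌊μ * (b : ℝ)⌋ : ℝ)) / ((a : ℝ) + b)
      ≤ (((Finset.univ.filter (fun v : Fin (a + b) → Bool =>
        countA (a + b) v (a + b) = a ∧
        ∀ r, 1 ≤ r → r ≤ a + b →
          μ * (countB (a + b) v r : ℝ) < (countA (a + b) v r : ℝ))).card : ℝ) /
      ((Finset.univ.filter (fun v : Fin (a + b) → Bool =>
        countA (a + b) v (a + b) = a)).card : ℝ)) := by
  have : NeZero (a + b) := ⟨by omega⟩
  set G := Finset.univ.filter (fun v : Fin (a + b) → Bool =>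
    countA (a + b) v (a + b) = a ∧ ∀ r, 1 ≤ r → r ≤ a + b →
      μ * (countB (a + b) v r : ℝ) < (countA (a + b) v r : ℝ))
  set Ω := Finset.univ.filter (fun v : Fin (a + b) → Bool => countA (a + b) v (a + b) = a)
  have hd : 0 < (a : ℝ) - μ * b := by linarith
  have hgood : ∀ v ∈ Ω, ⌈(a : ℝ) - μ * b⌉₊ ≤ #{j | cyclicShift v j ∈ G} := by
    intro v hv
    have hvA : countA (a + b) v (a + b) = a := (mem_filter.1 hv).2
    have hvB : countB (a + b) v (a + b) = b := by
      have := countA_add_countB v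
      omega
    have hbound := ceil_le_card_cyclicShift_ballot (μ := μ) (by linarith) (v := v)
    rw [hvA, hvB] at hbound
    refine (hbound hd).trans (card_le_card fun j hj => ?_)
    simp only [G, mem_filter, mem_univ, true_and] at hj ⊢
    exact ⟨(countA_cyclicShift v j).trans hvA, hj⟩
  have hcount : ⌈(a : ℝ) - μ * b⌉₊ * #Ω ≤ (a + b) * #G := by
    have := card_mul_le_card_mul_of_injective (fun j v => cyclicShift v j)
      cyclicShift_injective Ω G _ hgood
    rwa [Fintype.card_fin] at this
  have hΩ : 0 < #Ω := card_pos.2 ⟨_, mem_filter.2 ⟨mem_univ _, countA_decide_lt (by omega)⟩⟩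
  have hceil : (⌈(a : ℝ) - μ * b⌉₊ : ℝ) = a - ⌊μ * b⌋ := by
    rw [← Int.cast_natCast, Int.natCast_ceil_eq_ceil hd.le, ← neg_sub, Int.ceil_neg,
      Int.floor_sub_natCast]
    push_cast
    ring
  rw [div_le_div_iff₀ (by positivity) (by exact_mod_cast hΩ), ← hceil]
  exact_mod_cast hcount.trans_eq (mul_comm _ _)

open Classical in
theorem ballot_strict_lower_bound (μ : ℝ) (a b : ℕ) (hμ : 0 < μ) (ha : 0 < a) (hb : 0 < b)
    (hab : μ * b < a) :
    ((a : ℝ) - (⌊μ * (b : ℝ)⌋ : ℝ)) / ((a : ℝ) + b)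
      ≤ (((Finset.univ.filter (fun v : Fin (a + b) → Bool =>
        countA (a + b) v (a + b) = a ∧
        ∀ r, 1 ≤ r → r ≤ a + b →
          μ * (countB (a + b) v r : ℝ) < (countA (a + b) v r : ℝ))).card : ℝ) /
      ((Finset.univ.filter (fun v : Fin (a + b) → Bool =>
        countA (a + b) v (a + b) = a)).card : ℝ)) :=
  ballot_strict_lower_bound_general μ a b hμ ha hab
end

section
/- Let μ be a positive real number and a, b positive integers with a ≥ μb. The probability P* that a random ordering of a votes for A and b votes for B satisfies a_r ≥ μ·b_r for all r is at most (a + 1 - μb)/(a + 1). -/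
/-!
Weight an A-vote by `1` and a B-vote by `-μ`. Putting an extra A-vote in front turns every
favourable ordering into a word of length `n = a + b + 1` with `a + 1` A-votes, total weight
`s = a + 1 - μ b`, all of whose partial sums are at least `1`. By the cycle lemma at most `s`
of the `n` cyclic rotations of any such word have this property: if `k₁ < ⋯ < k_m` are the good
starting points, the partial sums `S` satisfy `S k₁ + m ≤ S (k₁ + n) = S k₁ + s`.
Counting pairs (word, good rotation) shows that at most `s / n` of all `C(n, a + 1)` words are
good, and `C(n, a + 1) / n = C(a + b, a) / (a + 1)`.
-/

open Finset Function
open Fin.NatCast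

theorem add_card_le_of_one_separated {α : Type*} [LinearOrder α] (f : α → ℝ) (s : Finset α)
    (hsep : ∀ i ∈ s, ∀ j ∈ s, i < j → f i + 1 ≤ f j) {c y : ℝ} (hc : ∀ i ∈ s, c ≤ f i)
    (hcy : c ≤ y) (hy : ∀ i ∈ s, f i + 1 ≤ y) : c + #s ≤ y := by
  classical
  induction s using Finset.induction_on_max generalizing y with
  | empty => simpa using hcy
  | insert a t hlt ih =>
    have hat : a ∉ t := fun h => lt_irrefl a (hlt a h)
    have ht : c + #t ≤ f a :=
      ih (fun i hi j hj => hsep i (mem_insert_of_mem hi) j (mem_insert_of_mem hj))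
        (fun i hi => hc i (mem_insert_of_mem hi)) (hc a (mem_insert_self a t))
        (fun i hi => hsep i (mem_insert_of_mem hi) a (mem_insert_self a t) (hlt i hi))
    rw [card_insert_of_notMem hat]
    push_cast
    linarith [hy a (mem_insert_self a t)]

theorem Function.Periodic.sum_range_comp_add {M : Type*} [AddCancelCommMonoid M]
    {x : ℕ → M} {n : ℕ} (hx : Periodic x n) (k : ℕ) :
    ∑ i ∈ range n, x (k + i) = ∑ i ∈ range n, x i := by
  induction k with
  | zero => simp
  | succ k ih =>
    have h := (sum_range_succ' (fun i => x (k + i)) n).symm.trans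
      (sum_range_succ (fun i => x (k + i)) n)
    rw [add_zero, hx k, add_left_inj] at h
    simp only [add_right_comm k 1, add_assoc k, h, ih]

def OneLePartialSums (x : ℕ → ℝ) (n : ℕ) : Prop :=
  ∀ m, 1 ≤ m → m ≤ n → 1 ≤ ∑ i ∈ range m, x i

open Classical in
theorem card_rotations_oneLePartialSums_le {x : ℕ → ℝ} {n : ℕ} (hx : Periodic x n)
    (hs : 0 ≤ ∑ i ∈ range n, x i) :
    (#{k : Fin n | OneLePartialSums (fun i => x (k + i)) n} : ℝ) ≤ ∑ i ∈ range n, x i := by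
  set S : ℕ → ℝ := fun m => ∑ i ∈ range m, x i with hS
  set K : Finset (Fin n) := {k | OneLePartialSums (fun i => x (k + i)) n}
  have window : ∀ k ∈ K, ∀ j : ℕ, k < j → j ≤ k + n → S k + 1 ≤ S j := by
    intro k hk j hkj hjn
    have hgood := (mem_filter.1 hk).2 (j - k) (by omega) (by omega)
    have hsplit := sum_range_add x k (j - k)
    rw [Nat.add_sub_cancel' hkj.le] at hsplit
    simp only [hS, hsplit]
    linarith
  rcases K.eq_empty_or_nonempty with hK | hK
  · simpa [hK] using hs
  set k₀ := K.min' hK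
  have hk₀ : k₀ ∈ K := K.min'_mem hK
  have hperiod : S (k₀ + n) = S k₀ + S n := by
    simp only [hS, sum_range_add, hx.sum_range_comp_add]
  have hsep : ∀ i ∈ K, ∀ j ∈ K, i < j → S i + 1 ≤ S j :=
    fun i hi j _ hij => window i hi j hij (by omega)
  have := add_card_le_of_one_separated (fun k : Fin n => S k) K hsep (c := S k₀)
    (y := S (k₀ + n))
    (fun i hi => (K.min'_le i hi).eq_or_lt.elim (fun h => h ▸ le_rfl)
      (fun h => by linarith [hsep k₀ hk₀ i hi h]))
    (by linarith [window k₀ hk₀ (k₀ + n) (by omega) le_rfl])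
    (fun i hi => window i hi (k₀ + n) (by omega) (by simp [k₀, K.min'_le i hi]))
  linarith

theorem card_mul_card_filter_le {ι X : Type*} [Fintype ι] (σ : ι → X ≃ X) {Q : Finset X}
    (hQ : ∀ k x, σ k x ∈ Q ↔ x ∈ Q) (P : X → Prop) [DecidablePred P] {M : ℝ}
    (hM : ∀ x ∈ Q, (#{k | P (σ k x)} : ℝ) ≤ M) :
    (Fintype.card ι : ℝ) * #{x ∈ Q | P x} ≤ M * #Q := by
  have hrot : ∀ k, #{x ∈ Q | P (σ k x)} = #{x ∈ Q | P x} :=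
    fun k => card_equiv (σ k) (by simp [hQ])
  have hswap : ∑ k, #{x ∈ Q | P (σ k x)} = ∑ x ∈ Q, #{k | P (σ k x)} := by
    simp only [card_filter]
    exact sum_comm
  calc (Fintype.card ι : ℝ) * #{x ∈ Q | P x} = ∑ x ∈ Q, (#{k | P (σ k x)} : ℝ) := by
        rw [← Nat.cast_sum, ← hswap]
        simp [hrot]
    _ ≤ ∑ x ∈ Q, M := sum_le_sum hM
    _ = M * #Q := by rw [sum_const, nsmul_eq_mul, mul_comm]

def rotate {G α : Type*} [AddGroup G] (k : G) : (G → α) ≃ (G → α) where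
  toFun u i := u (i + k)
  invFun u i := u (i - k)
  left_inv u := by ext; simp
  right_inv u := by ext; simp

section Words

variable {n : ℕ}

theorem countA_self (u : Fin n → Bool) : countA n u n = #{i | u i = true} := by
  simp [countA]

theorem countA_add_countB_self (u : Fin n → Bool) : countA n u n + countB n u n = n := by
  simp only [countA, countB, Fin.is_lt, true_and, Bool.eq_false_iff]
  rw [card_filter_add_card_filter_not, card_univ, Fintype.card_fin]

theorem card_countA_self_eq (t : ℕ) : #{u : Fin n → Bool | countA n u n = t} = n.choose t := by
  calc _ = #(powersetCard t (univ : Finset (Fin n))) := ?_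
    _ = n.choose t := by simp
  refine card_nbij' (fun u => ({i | u i = true} : Finset (Fin n))) (fun s i => decide (i ∈ s))
    ?_ ?_ ?_ ?_
  · intro u hu
    simpa [countA_self] using hu
  · intro s hs
    simp_all [countA_self]
  · intro u _
    ext i
    simp
  · intro s _
    ext i
    simp

theorem countA_cons_true {N : ℕ} (v : Fin N → Bool) (r : ℕ) :
    countA (N + 1) (Fin.cons true v) (r + 1) = countA N v r + 1 := by
  simp only [countA, card_filter, Fin.sum_univ_succ]
  simp [Fin.cons_succ, Fin.val_succ, add_comm]

theorem countB_cons_true {N : ℕ} (v : Fin N → Bool) (r : ℕ) :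
    countB (N + 1) (Fin.cons true v) (r + 1) = countB N v r := by
  simp only [countB, card_filter, Fin.sum_univ_succ]
  simp [Fin.cons_succ, Fin.val_succ]

variable [NeZero n]

theorem countA_rotate (u : Fin n → Bool) (k : Fin n) :
    countA n (rotate k u) n = countA n u n := by
  rw [countA_self, countA_self]
  exact card_equiv (Equiv.addRight k) (fun i => by simp only [mem_filter, mem_univ, true_and]; rfl)

def weightSeq (μ : ℝ) (u : Fin n → Bool) (i : ℕ) : ℝ :=
  if u i = true then 1 else -μ

theorem weightSeq_periodic (μ : ℝ) (u : Fin n → Bool) : Periodic (weightSeq μ u) n := by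
  intro i
  simp [weightSeq]

theorem weightSeq_rotate (μ : ℝ) (u : Fin n → Bool) (k : Fin n) :
    weightSeq μ (rotate k u) = fun i => weightSeq μ u (k + i) := by
  ext i
  simp [weightSeq, rotate, add_comm]

theorem sum_range_weightSeq (μ : ℝ) (u : Fin n → Bool) {r : ℕ} (hr : r ≤ n) :
    ∑ i ∈ range r, weightSeq μ u i = countA n u r - μ * countB n u r := by
  have hrange : range r = (univ.filter fun i : Fin n => i.val < r).map Fin.valEmbedding := by
    ext j
    simp only [mem_range, mem_map, mem_filter, mem_univ, true_and, Fin.valEmbedding_apply]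
    exact ⟨fun hj => ⟨⟨j, by omega⟩, hj, rfl⟩, by rintro ⟨i, hi, rfl⟩; exact hi⟩
  rw [hrange, sum_map]
  simp only [weightSeq, Fin.valEmbedding_apply, Fin.cast_val_eq_self, sum_ite, filter_filter,
    sum_const, countA, countB, Bool.not_eq_true]
  simp [mul_comm]
  ring

end Words

theorem oneLePartialSums_cons_true (μ : ℝ) {N : ℕ} (v : Fin N → Bool)
    (hv : ∀ r, 1 ≤ r → r ≤ N → μ * (countB N v r : ℝ) ≤ countA N v r) :
    OneLePartialSums (weightSeq μ (Fin.cons true v : Fin (N + 1) → Bool)) (N + 1) := by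
  intro m hm hmN
  obtain ⟨r, rfl⟩ : ∃ r, m = r + 1 := ⟨m - 1, by omega⟩
  rw [sum_range_weightSeq μ _ hmN, countA_cons_true, countB_cons_true]
  rcases Nat.eq_zero_or_pos r with rfl | hr
  · simp [countA, countB]
  · push_cast
    linarith [hv r hr (by omega)]

open Classical in
theorem card_le_card_oneLePartialSums_cons (μ : ℝ) (N t : ℕ) :
    #{v : Fin N → Bool | countA N v N = t ∧
      ∀ r, 1 ≤ r → r ≤ N → μ * (countB N v r : ℝ) ≤ countA N v r} ≤
    #{u ∈ ({u | countA (N + 1) u (N + 1) = t + 1} : Finset (Fin (N + 1) → Bool)) |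
      OneLePartialSums (weightSeq μ u) (N + 1)} := by
  refine card_le_card_of_injOn (fun v => Fin.cons true v) (fun v hv => ?_) (fun v _ w _ h => ?_)
  · simp only [mem_coe, mem_filter, mem_univ, true_and] at hv
    obtain ⟨hA, hv⟩ := hv
    refine mem_filter.2 ⟨mem_filter.2 ⟨mem_univ _, ?_⟩, oneLePartialSums_cons_true μ v hv⟩
    rw [countA_cons_true, hA]
  · simpa using congrArg Fin.tail h

open Classical in
theorem card_mul_card_oneLePartialSums_le (μ : ℝ) {n t m : ℕ} [NeZero n] (hn : t + m = n)
    (hμ : μ * m ≤ t) :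
    (n : ℝ) * #{u ∈ ({u | countA n u n = t} : Finset (Fin n → Bool)) |
      OneLePartialSums (weightSeq μ u) n} ≤
      (t - μ * m) * #({u | countA n u n = t} : Finset (Fin n → Bool)) := by
  set Q : Finset (Fin n → Bool) := {u | countA n u n = t} with hQ
  have hweight : ∀ u ∈ Q, ∑ i ∈ range n, weightSeq μ u i = t - μ * m := by
    intro u hu
    have hA : countA n u n = t := (mem_filter.1 hu).2
    have hB : countB n u n = m := by have := countA_add_countB_self u; omega
    rw [sum_range_weightSeq μ u le_rfl, hA, hB]
  simpa using card_mul_card_filter_le rotate (Q := Q) (M := t - μ * m)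
    (fun k u => by simp only [hQ, mem_filter, mem_univ, true_and, countA_rotate])
    (fun u => OneLePartialSums (weightSeq μ u) n)
    fun u hu => by
      rw [← hweight u hu]
      convert card_rotations_oneLePartialSums_le (weightSeq_periodic μ u)
        (by rw [hweight u hu]; linarith) using 4
      rw [weightSeq_rotate]

open Classical in
theorem ballot_weak_upper_bound_general (μ : ℝ) (a b : ℕ) (hab : μ * b ≤ a) :
    (((Finset.univ.filter (fun v : Fin (a + b) → Bool =>
        countA (a + b) v (a + b) = a ∧
        ∀ r, 1 ≤ r → r ≤ a + b →
          μ * (countB (a + b) v r : ℝ) ≤ (countA (a + b) v r : ℝ))).card : ℝ) /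
      ((Finset.univ.filter (fun v : Fin (a + b) → Bool =>
        countA (a + b) v (a + b) = a)).card : ℝ))
      ≤ ((a : ℝ) + 1 - μ * b) / ((a : ℝ) + 1) := by
  have hfav : (_ : ℝ) ≤ _ := Nat.cast_le.2 (card_le_card_oneLePartialSums_cons μ (a + b) a)
  have hgood := card_mul_card_oneLePartialSums_le μ (n := a + b + 1) (t := a + 1) (m := b)
    (by omega) (by push_cast; linarith)
  rw [card_countA_self_eq] at hgood
  have hchoose : ((a + 1) * (a + b + 1).choose (a + 1) : ℝ) = (a + b + 1) * (a + b).choose a := by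
    exact_mod_cast (mul_comm _ _).trans (Nat.add_one_mul_choose_eq (a + b) a).symm
  have hpos : (0 : ℝ) < (a + b).choose a := by exact_mod_cast Nat.choose_pos (by omega)
  rw [card_countA_self_eq, div_le_div_iff₀ hpos (by positivity)]
  refine le_of_mul_le_mul_left ?_ (by positivity : (0 : ℝ) < a + b + 1)
  push_cast at hgood
  linear_combination ((a + b + 1 : ℝ) * (a + 1)) * hfav + (a + 1 : ℝ) * hgood
    + (a + 1 - μ * b) * hchoose

open Classical in
theorem ballot_weak_upper_bound (μ : ℝ) (a b : ℕ) (hμ : 0 < μ) (ha : 0 < a) (hb : 0 < b)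
    (hab : μ * b ≤ a) :
    (((Finset.univ.filter (fun v : Fin (a + b) → Bool =>
        countA (a + b) v (a + b) = a ∧
        ∀ r, 1 ≤ r → r ≤ a + b →
          μ * (countB (a + b) v r : ℝ) ≤ (countA (a + b) v r : ℝ))).card : ℝ) /
      ((Finset.univ.filter (fun v : Fin (a + b) → Bool =>
        countA (a + b) v (a + b) = a)).card : ℝ))
      ≤ ((a : ℝ) + 1 - μ * b) / ((a : ℝ) + 1) :=
  ballot_weak_upper_bound_general μ a b hab
end
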